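/- arXiv:2111.07371 — 3 statements merged into one kernel-verified Lean document; each statement's English description precedes it below -/
import Mathlib

section
/- For λ > 0, the function h ↦ (θ(h) - 1)/h, where θ(h) = -log(1-λh)/(λh), is increasing on (0, 1/(2λ)], its limit as h → 0⁺ equals λ/2, and for all h ∈ (0, 1/(2λ)] one has (θ(h)-1)/h ≤ 2λ(2 log 2 - 1). -/
/-!
Substituting `x = λh` gives `(θ(h) - 1) / h = λ G(λh)` with
`G(x) = (-log (1 - x) - x) / x² = ∑ xⁿ / (n + 2)`. A power series with positive coefficients
is increasing on `(0, 1)`, its constant term `1 / 2` is the limit at `0`, and the bound is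
`λ G(1 / 2)`, the value at the right endpoint.
-/

open Real Filter Topology Set

/-- The junk value at `0` is `0`, not the limit `1 / 2`. -/
noncomputable def logRemainder (x : ℝ) : ℝ := (-log (1 - x) - x) / x ^ 2

lemma hasSum_logRemainder {x : ℝ} (hx0 : x ≠ 0) (hx : |x| < 1) :
    HasSum (fun n : ℕ => x ^ n / (n + 2)) (logRemainder x) := by
  have hlog := (hasSum_nat_add_iff' 1).2 (hasSum_pow_div_log_of_abs_lt_one hx)
  simp only [Finset.range_one, Finset.sum_singleton, Nat.cast_zero, zero_add, pow_one,
    div_one] at hlog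
  refine (hlog.div_const (x ^ 2)).congr_fun fun n => ?_
  push_cast
  field_simp
  ring

lemma logRemainder_monotoneOn : MonotoneOn logRemainder (Ioo 0 1) := by
  intro a ⟨ha0, _⟩ b ⟨hb0, _⟩ hab
  refine hasSum_le (fun n => ?_) (hasSum_logRemainder ha0.ne' (by rwa [abs_of_pos ha0]))
    (hasSum_logRemainder hb0.ne' (by rwa [abs_of_pos hb0]))
  gcongr

lemma abs_logRemainder_sub_half_le {x : ℝ} (hx0 : x ≠ 0) (hx : |x| < 1) :
    |logRemainder x - 1 / 2| ≤ |x| / (1 - |x|) := by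
  have htaylor := abs_log_sub_add_sum_range_le hx 2
  have hsq : 0 < |x| ^ 2 := by positivity
  have heq : logRemainder x - 1 / 2
      = -((∑ i ∈ Finset.range 2, x ^ (i + 1) / (i + 1)) + log (1 - x)) / x ^ 2 := by
    simp only [logRemainder, Finset.sum_range_succ, Finset.sum_range_zero]
    field_simp
    ring
  rw [heq, abs_div, abs_neg, abs_pow, div_le_iff₀ hsq]
  calc _ ≤ |x| ^ (2 + 1) / (1 - |x|) := htaylor
    _ = |x| / (1 - |x|) * |x| ^ 2 := by ring

lemma tendsto_logRemainder : Tendsto logRemainder (𝓝[≠] 0) (𝓝 (1 / 2)) := by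
  have hbound : Tendsto (fun x : ℝ => |x| / (1 - |x|)) (𝓝[≠] 0) (𝓝 0) := by
    have : Tendsto (fun x : ℝ => |x| / (1 - |x|)) (𝓝 0) (𝓝 (|0| / (1 - |0|))) :=
      (continuous_abs.tendsto (0 : ℝ)).div
        (tendsto_const_nhds.sub (continuous_abs.tendsto (0 : ℝ))) (by simp)
    simpa using this.mono_left nhdsWithin_le_nhds
  rw [tendsto_iff_norm_sub_tendsto_zero]
  refine squeeze_zero' (Eventually.of_forall fun _ => norm_nonneg _) ?_ hbound
  filter_upwards [self_mem_nhdsWithin, nhdsWithin_le_nhds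
    ((isOpen_lt continuous_abs continuous_const).mem_nhds (by simp : |(0 : ℝ)| < 1))]
    with x hx0 hx
  exact abs_logRemainder_sub_half_le hx0 hx

lemma logRemainder_half : logRemainder (1 / 2) = 4 * log 2 - 2 := by
  rw [logRemainder, show (1 : ℝ) - 1 / 2 = 2⁻¹ by norm_num, log_inv]
  ring

lemma theta_sub_one_div_eq {lam : ℝ} (hlam : lam ≠ 0) (h : ℝ) :
    (-log (1 - lam * h) / (lam * h) - 1) / h = lam * logRemainder (lam * h) := by
  rcases eq_or_ne h 0 with rfl | hh
  · simp [logRemainder]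
  · rw [logRemainder]
    field_simp

theorem stmt_3 (lam : ℝ) (hlam : 0 < lam) :
    MonotoneOn (fun h : ℝ => (-Real.log (1 - lam * h) / (lam * h) - 1) / h)
        (Set.Ioc 0 (1 / (2 * lam))) ∧
      Tendsto (fun h : ℝ => (-Real.log (1 - lam * h) / (lam * h) - 1) / h)
        (nhdsWithin 0 (Set.Ioi 0)) (nhds (lam / 2)) ∧
      ∀ h ∈ Set.Ioc (0 : ℝ) (1 / (2 * lam)),
        (-Real.log (1 - lam * h) / (lam * h) - 1) / h ≤ 2 * lam * (2 * Real.log 2 - 1) := by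
  simp only [theta_sub_one_div_eq hlam.ne']
  have hscale : MapsTo (lam * ·) (Ioc 0 (1 / (2 * lam))) (Ioc 0 (1 / 2)) := by
    rintro h ⟨hh0, hh⟩
    refine ⟨by positivity, ?_⟩
    calc lam * h ≤ lam * (1 / (2 * lam)) := by gcongr
      _ = 1 / 2 := by field_simp
  have hsub : Ioc (0 : ℝ) (1 / 2) ⊆ Ioo 0 1 := Ioc_subset_Ioo_right (by norm_num)
  refine ⟨fun a ha b hb hab => ?_, ?_, fun h hh => ?_⟩
  · exact mul_le_mul_of_nonneg_left (logRemainder_monotoneOn (hsub (hscale ha))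
      (hsub (hscale hb)) (mul_le_mul_of_nonneg_left hab hlam.le)) hlam.le
  · have hscale_lim : Tendsto (lam * ·) (𝓝[>] 0) (𝓝[≠] 0) :=
      tendsto_nhdsWithin_of_tendsto_nhds_of_eventually_within _
        ((continuous_const_mul lam).tendsto' 0 0 (mul_zero lam) |>.mono_left nhdsWithin_le_nhds)
        (eventually_nhdsWithin_of_forall fun h hh => (mul_pos hlam hh).ne')
    simpa [div_eq_mul_inv] using (tendsto_logRemainder.comp hscale_lim).const_mul lam
  · calc lam * logRemainder (lam * h)
        ≤ lam * logRemainder (1 / 2) := mul_le_mul_of_nonneg_left (logRemainder_monotoneOn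
          (hsub (hscale hh)) (hsub ⟨by norm_num, le_rfl⟩) (hscale hh).2) hlam.le
      _ = 2 * lam * (2 * log 2 - 1) := by
        rw [logRemainder_half]
        ring
end

section
/- Let λ > 0, 0 < h ≤ 1/(2λ), and θ = -log(1-λh)/(λh). For every s ≥ 0, |s - θ⌊s/h⌋h| ≤ (θ-1)s + θh. -/
/-!
Since `log (1 - x) ≤ -x`, the factor `θ` is at least `1`. Writing `f = ⌊s/h⌋h`, we have
`0 ≤ f ≤ s < f + h`, hence `s - θ f ≤ s - f ≤ h ≤ θ h` and `θ f - s ≤ θ s - s`.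
-/

open Real

namespace Nat

variable {k : Type*} [Field k] [LinearOrder k] [IsStrictOrderedRing k] [FloorSemiring k]

theorem sub_floor_div_mul_nonneg {a b : k} (ha : 0 ≤ a) (hb : 0 < b) : 0 ≤ a - ⌊a / b⌋₊ * b :=
  sub_nonneg.2 <| (le_div_iff₀ hb).1 <| floor_le <| div_nonneg ha hb.le

theorem sub_floor_div_mul_lt (a : k) {b : k} (hb : 0 < b) : a - ⌊a / b⌋₊ * b < b :=
  sub_lt_iff_lt_add.2 <| by
    simpa [add_mul, add_comm] using (div_lt_iff₀ hb).1 (lt_floor_add_one (a / b))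

end Nat

theorem one_le_neg_log_one_sub_div {x : ℝ} (hx0 : 0 < x) (hx1 : x < 1) :
    1 ≤ -log (1 - x) / x := by
  rw [le_div_iff₀ hx0]
  linarith [log_le_sub_one_of_pos (sub_pos.2 hx1)]

theorem abs_sub_mul_le_of_sub_le {s f h θ : ℝ} (hθ : 1 ≤ θ) (hf : 0 ≤ f) (hfs : f ≤ s)
    (hsf : s - f ≤ h) : |s - θ * f| ≤ (θ - 1) * s + θ * h := by
  have hθf : f ≤ θ * f := le_mul_of_one_le_left hf hθ
  have hθs : θ * f ≤ θ * s := mul_le_mul_of_nonneg_left hfs (by linarith)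
  have hh : h ≤ θ * h := le_mul_of_one_le_left (by linarith) hθ
  have hs : 0 ≤ (θ - 1) * s := mul_nonneg (by linarith) (by linarith)
  rw [abs_le]
  constructor <;> linarith

theorem stmt_4 (lam h : ℝ) (hlam : 0 < lam) (hh : 0 < h) (hh2 : h ≤ 1 / (2 * lam))
    (θ : ℝ) (hθ : θ = -Real.log (1 - lam * h) / (lam * h)) :
    ∀ s : ℝ, 0 ≤ s → |s - θ * (⌊s / h⌋₊ * h)| ≤ (θ - 1) * s + θ * h := by
  intro s hs
  have hlamh : lam * h ≤ 1 / 2 := by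
    rw [le_div_iff₀ (by positivity)] at hh2
    linarith
  have hθ1 : 1 ≤ θ := hθ ▸ one_le_neg_log_one_sub_div (mul_pos hlam hh) (by linarith)
  exact abs_sub_mul_le_of_sub_le hθ1 (by positivity)
    (sub_nonneg.1 (Nat.sub_floor_div_mul_nonneg hs hh)) (Nat.sub_floor_div_mul_lt s hh).le
end

section
/- Let λ > 0, M_g > 0, 0 < h ≤ 1/(2λ), and θ = -log(1-λh)/(λh). Then ∫_0^∞ M_g |e^{-λ s} - e^{-λ θ ⌊s/h⌋ h}| ds ≤ C h for a constant C depending only on M_g and λ. -/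
/-!
Write `u = λh` and `θ = -log(1 - u)/u`, so that `1 ≤ θ ≤ 1 + 2u` for `u ≤ 1/2`. For `s > 0` put
`t = ⌊s/h⌋ h ∈ (s - h, s]`. Both exponents `λs` and `λθt` are at least `λ(s - h)`, so by the mean
value theorem the integrand is at most `M_g e^{-λ(s-h)} |λs - λθt|`, and
`|λs - λθt| ≤ λ(s - t) + λ(θ - 1)t ≤ λh + 2λ²hs`, while `e^{λh} ≤ 2`. Integrating
`2λh(1 + 2λs)e^{-λs}` over `(0, ∞)` gives `6h`.
-/

open Real MeasureTheory Set
open scoped Nat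

lemma one_le_neg_log_one_sub_div_s5 {u : ℝ} (hu0 : 0 < u) (hu1 : u < 1) :
    1 ≤ -log (1 - u) / u := by
  rw [le_div_iff₀ hu0]
  linarith [log_le_sub_one_of_pos (sub_pos.2 hu1)]

lemma neg_log_one_sub_div_le {u : ℝ} (hu0 : 0 < u) (hu : u ≤ 1 / 2) :
    -log (1 - u) / u ≤ 1 + 2 * u := by
  have h1u : 0 < 1 - u := by linarith
  have hlog : -(1 - u)⁻¹ * u ≤ log (1 - u) := by
    have := one_sub_inv_le_log_of_pos h1u
    rwa [show 1 - (1 - u)⁻¹ = -(1 - u)⁻¹ * u by field_simp; ring] at this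
  have hinv : (1 - u)⁻¹ ≤ 1 + 2 * u := by
    rw [inv_le_iff_one_le_mul₀ h1u]
    nlinarith
  rw [div_le_iff₀ hu0]
  nlinarith

lemma natFloor_div_mul_le {s h : ℝ} (hs : 0 ≤ s) (hh : 0 < h) : ⌊s / h⌋₊ * h ≤ s :=
  (le_div_iff₀ hh).1 (Nat.floor_le (div_nonneg hs hh.le))

lemma lt_natFloor_div_mul_add (s : ℝ) {h : ℝ} (hh : 0 < h) : s < ⌊s / h⌋₊ * h + h := by
  rw [← add_one_mul, ← div_lt_iff₀ hh]
  exact Nat.lt_floor_add_one _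

lemma abs_exp_neg_sub_exp_neg_le {a b c : ℝ} (ha : c ≤ a) (hb : c ≤ b) :
    |exp (-a) - exp (-b)| ≤ exp (-c) * |a - b| := by
  wlog hab : a ≤ b generalizing a b
  · rw [abs_sub_comm, abs_sub_comm a]
    exact this hb ha (le_of_not_ge hab)
  -- `e^{-a} - e^{-b} = e^{-a}(1 - e^{a-b}) ≤ e^{-a}(b - a)`
  have hsplit : exp (-b) = exp (-a) * exp (a - b) := by rw [← exp_add]; ring_nf
  have hexp : a - b + 1 ≤ exp (a - b) := add_one_le_exp _
  have hmono : exp (-a) ≤ exp (-c) := exp_le_exp.2 (neg_le_neg ha)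
  rw [abs_of_nonneg (sub_nonneg.2 (exp_le_exp.2 (neg_le_neg hab))), abs_of_nonpos (by linarith),
    hsplit]
  nlinarith [exp_pos (-a)]

lemma abs_exp_neg_mul_sub_exp_neg_mul_le {lam h θ s t : ℝ} (hlam : 0 ≤ lam)
    (hlh : lam * h ≤ 1 / 2) (hθ1 : 1 ≤ θ) (hθ2 : θ ≤ 1 + 2 * (lam * h))
    (ht : 0 ≤ t) (hts : t ≤ s) (hst : s ≤ t + h) :
    |exp (-(lam * s)) - exp (-(lam * θ * t))| ≤
      2 * lam * h * (1 + 2 * lam * s) * exp (-(lam * s)) := by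
  have hh : 0 ≤ h := by linarith
  have hlt : lam * (s - h) ≤ lam * t := mul_le_mul_of_nonneg_left (by linarith) hlam
  have htθ : lam * t ≤ lam * θ * t := by nlinarith [mul_nonneg hlam ht]
  have hdiff : |lam * s - lam * θ * t| ≤ lam * h * (1 + 2 * lam * s) := by
    have h1 : lam * (s - t) ≤ lam * h := mul_le_mul_of_nonneg_left (by linarith) hlam
    have h2 : lam * t * (θ - 1) ≤ lam * s * (2 * (lam * h)) :=
      mul_le_mul (mul_le_mul_of_nonneg_left hts hlam) (by linarith) (by linarith)
        (mul_nonneg hlam (ht.trans hts))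
    rw [abs_le]
    constructor <;> nlinarith [mul_nonneg hlam (sub_nonneg.2 hts), mul_nonneg hlam ht]
  have hshift : exp (-(lam * (s - h))) ≤ 2 * exp (-(lam * s)) := by
    have hexp : exp (lam * h) ≤ 2 :=
      (exp_bound_div_one_sub_of_interval (mul_nonneg hlam hh) (by linarith)).trans
        ((div_le_iff₀ (by linarith)).2 (by linarith))
    rw [show -(lam * (s - h)) = lam * h + -(lam * s) by ring, exp_add]
    exact mul_le_mul_of_nonneg_right hexp (exp_pos _).le
  calc |exp (-(lam * s)) - exp (-(lam * θ * t))|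
      ≤ exp (-(lam * (s - h))) * |lam * s - lam * θ * t| :=
        abs_exp_neg_sub_exp_neg_le (by nlinarith) (hlt.trans htθ)
    _ ≤ 2 * exp (-(lam * s)) * (lam * h * (1 + 2 * lam * s)) :=
        mul_le_mul hshift hdiff (abs_nonneg _) (by positivity)
    _ = 2 * lam * h * (1 + 2 * lam * s) * exp (-(lam * s)) := by ring

lemma integral_pow_mul_exp_neg_mul_Ioi (k : ℕ) {c : ℝ} (hc : 0 < c) :
    ∫ x in Ioi 0, x ^ k * exp (-(c * x)) = k ! / c ^ (k + 1) := by
  have key := integral_rpow_mul_exp_neg_mul_Ioi (a := k + 1) (by positivity) hc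
  simp only [add_sub_cancel_right, rpow_natCast] at key
  rw [key, Gamma_nat_eq_factorial, ← Nat.cast_add_one, rpow_natCast, div_pow, one_pow,
    one_div_mul_eq_div]

lemma integrableOn_pow_mul_exp_neg_mul_Ioi (k : ℕ) {c : ℝ} (hc : 0 < c) :
    IntegrableOn (fun x ↦ x ^ k * exp (-(c * x))) (Ioi 0) :=
  .of_integral_ne_zero (by rw [integral_pow_mul_exp_neg_mul_Ioi k hc]; positivity)


lemma one_add_mul_mul_exp_neg_mul_eq (a c x : ℝ) :
    (1 + a * x) * exp (-(c * x)) = x ^ 0 * exp (-(c * x)) + a * (x ^ 1 * exp (-(c * x))) := by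
  ring

lemma integrableOn_one_add_mul_mul_exp_neg_mul_Ioi (a : ℝ) {c : ℝ} (hc : 0 < c) :
    IntegrableOn (fun x ↦ (1 + a * x) * exp (-(c * x))) (Ioi 0) := by
  simp_rw [one_add_mul_mul_exp_neg_mul_eq]
  exact (integrableOn_pow_mul_exp_neg_mul_Ioi 0 hc).add
    ((integrableOn_pow_mul_exp_neg_mul_Ioi 1 hc).const_mul a)

lemma integral_one_add_mul_mul_exp_neg_mul_Ioi (a : ℝ) {c : ℝ} (hc : 0 < c) :
    ∫ x in Ioi 0, (1 + a * x) * exp (-(c * x)) = 1 / c + a / c ^ 2 := by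
  simp_rw [one_add_mul_mul_exp_neg_mul_eq]
  rw [integral_add (integrableOn_pow_mul_exp_neg_mul_Ioi 0 hc)
      ((integrableOn_pow_mul_exp_neg_mul_Ioi 1 hc).const_mul a), integral_const_mul,
    integral_pow_mul_exp_neg_mul_Ioi 0 hc, integral_pow_mul_exp_neg_mul_Ioi 1 hc]
  simp only [Nat.factorial_zero, Nat.factorial_one, Nat.cast_one, zero_add, pow_one]
  ring

theorem stmt_5 (lam Mg : ℝ) (hlam : 0 < lam) (hMg : 0 < Mg) :
    ∃ C : ℝ, 0 < C ∧ ∀ h : ℝ, 0 < h → h ≤ 1 / (2 * lam) →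
      (∫ s in Set.Ioi (0 : ℝ),
          Mg * |Real.exp (-lam * s) -
            Real.exp (-(lam * (-Real.log (1 - lam * h) / (lam * h)) * (⌊s / h⌋₊ * h)))|) ≤
        C * h := by
  refine ⟨6 * Mg, by positivity, fun h hh hh2 ↦ ?_⟩
  have hlh : lam * h ≤ 1 / 2 := by
    have := (le_div_iff₀ (by positivity)).1 hh2
    linarith
  have hlh0 : 0 < lam * h := by positivity
  set θ := -log (1 - lam * h) / (lam * h)
  have hθ1 : 1 ≤ θ := one_le_neg_log_one_sub_div_s5 hlh0 (by linarith)
  have hθ2 : θ ≤ 1 + 2 * (lam * h) := neg_log_one_sub_div_le hlh0 hlh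
  have hpointwise : ∀ s ∈ Ioi (0 : ℝ),
      Mg * |exp (-lam * s) - exp (-(lam * θ * (⌊s / h⌋₊ * h)))| ≤
        Mg * (2 * lam * h) * ((1 + 2 * lam * s) * exp (-(lam * s))) := fun s hs ↦ by
    rw [neg_mul, mul_assoc Mg, ← mul_assoc (2 * lam * h)]
    exact mul_le_mul_of_nonneg_left (abs_exp_neg_mul_sub_exp_neg_mul_le hlam.le hlh hθ1 hθ2
      (by positivity) (natFloor_div_mul_le (le_of_lt hs) hh)
      (lt_natFloor_div_mul_add s hh).le) hMg.le
  calc _ ≤ ∫ s in Ioi 0, Mg * (2 * lam * h) * ((1 + 2 * lam * s) * exp (-(lam * s))) :=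
        integral_mono_of_nonneg (.of_forall fun s ↦ by positivity)
          ((integrableOn_one_add_mul_mul_exp_neg_mul_Ioi _ hlam).const_mul _)
          ((ae_restrict_iff' measurableSet_Ioi).2 (.of_forall hpointwise))
    _ = Mg * (2 * lam * h) * (1 / lam + 2 * lam / lam ^ 2) := by
        rw [integral_const_mul, integral_one_add_mul_mul_exp_neg_mul_Ioi _ hlam]
    _ = 6 * Mg * h := by field_simp; ring
end
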